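/- For all nonnegative integers n and m, the partisan chocolate game position PC(n,m) is a number, i.e., it is a numeric pregame (every Left option is strictly less than every Right option, hereditarily). -/

import Mathlib

/-!
The positions `PC n m` are totally preordered like `ω + ω*`: those with `n + m` even increase
with `n + m - 2 * (n % 2)`, and those with `n + m` odd lie above all of them and decrease with
`n + m`. We encode this by a key in `ℕ ⊕ₗ ℕᵒᵈ` and show `PC n m ≤ PC n' m' ↔ key n m ≤ key n' m'`
by induction: Left options have smaller and Right options larger key than their position, and
whenever the keys are in the wrong order one of the relevant options already overshoots. Hence
every Left option of `PC n m` lies below it and every Right option above it.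
-/

universe u

namespace SetTheory

/-- Pre-games (removed from Mathlib; reinstated with the old Mathlib meaning). -/
inductive PGame : Type (u + 1)
  | mk : ∀ α β : Type u, (α → PGame) → (β → PGame) → PGame

namespace PGame

/-- Simultaneous definition of `x ≤ y` (first component) and `x ⧏ y` (second component),
as in the old Mathlib `SetTheory.PGame`. -/
noncomputable def leLF (x : PGame.{u}) : PGame.{u} → Prop × Prop :=
  PGame.rec (motive := fun _ => PGame.{u} → Prop × Prop)
    (fun _ _ _ _ IHxL IHxR y =>
      PGame.rec (motive := fun _ => Prop × Prop)
        (fun yl yr yL yR IHyL IHyR =>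
          ((∀ i, (IHxL i (mk yl yr yL yR)).2) ∧ ∀ j, (IHyR j).2,
            (∃ i, (IHyL i).1) ∨ ∃ j, (IHxR j (mk yl yr yL yR)).1)) y) x

instance : LE PGame.{u} :=
  ⟨fun x y => (leLF x y).1⟩

instance : LT PGame.{u} :=
  ⟨fun x y => x ≤ y ∧ ¬y ≤ x⟩

/-- A pre-game is numeric if, hereditarily, every left option is less than every right option. -/
def Numeric : PGame.{u} → Prop
  | ⟨_, _, L, R⟩ => (∀ i j, L i < R j) ∧ (∀ i, Numeric (L i)) ∧ ∀ j, Numeric (R j)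

end PGame

end SetTheory

open SetTheory

/-- The partisan chocolate game position `PC n m`.
Left options: `PC n' m` with `n' < n` and `n' + m` even, and `PC n m'` with `m' < m` and
`n + m'` even. Right options: the same with "odd" in place of "even". -/
def PC : ℕ → ℕ → SetTheory.PGame
  | n, m =>
    SetTheory.PGame.mk
      {p : ℕ × ℕ // (p.2 = m ∧ p.1 < n ∧ Even (p.1 + m)) ∨ (p.1 = n ∧ p.2 < m ∧ Even (n + p.2))}
      {p : ℕ × ℕ // (p.2 = m ∧ p.1 < n ∧ Odd (p.1 + m)) ∨ (p.1 = n ∧ p.2 < m ∧ Odd (n + p.2))}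
      (fun p => PC p.1.1 p.1.2)
      (fun p => PC p.1.1 p.1.2)
termination_by n m => n + m
decreasing_by
  all_goals rcases p.2 with ⟨h1, h2, -⟩ | ⟨h1, h2, -⟩ <;> omega

namespace SetTheory.PGame

def LF (x y : PGame.{u}) : Prop := (leLF x y).2

infix:50 " ⧏ " => SetTheory.PGame.LF

theorem mk_le_mk {xl xr : Type u} {xL : xl → PGame.{u}} {xR : xr → PGame.{u}}
    {yl yr : Type u} {yL : yl → PGame.{u}} {yR : yr → PGame.{u}} :
    mk xl xr xL xR ≤ mk yl yr yL yR ↔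
      (∀ i, xL i ⧏ mk yl yr yL yR) ∧ ∀ j, mk xl xr xL xR ⧏ yR j := Iff.rfl

theorem mk_lf_mk {xl xr : Type u} {xL : xl → PGame.{u}} {xR : xr → PGame.{u}}
    {yl yr : Type u} {yL : yl → PGame.{u}} {yR : yr → PGame.{u}} :
    mk xl xr xL xR ⧏ mk yl yr yL yR ↔
      (∃ i, mk xl xr xL xR ≤ yL i) ∨ ∃ j, xR j ≤ mk yl yr yL yR := Iff.rfl

theorem lf_iff_not_le_and_symm (x y : PGame.{u}) :
    (x ⧏ y ↔ ¬ y ≤ x) ∧ (y ⧏ x ↔ ¬ x ≤ y) := by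
  induction x generalizing y with
  | mk xl xr xL xR ihxL ihxR =>
    induction y with
    | mk yl yr yL yR ihyL ihyR =>
      rw [mk_lf_mk, mk_le_mk, mk_lf_mk, mk_le_mk]
      simp only [fun i => (ihyL i).2, fun j => (ihxR j (mk yl yr yL yR)).2,
        fun i => (ihxL i (mk yl yr yL yR)).1, fun j => (ihyR j).1,
        not_and_or, not_forall, not_not, and_self]

theorem lf_iff_not_le {x y : PGame.{u}} : x ⧏ y ↔ ¬ y ≤ x :=
  (lf_iff_not_le_and_symm x y).1

theorem numeric_mk {l r : Type u} {L : l → PGame.{u}} {R : r → PGame.{u}} :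
    Numeric (mk l r L R) ↔ (∀ i j, L i < R j) ∧ (∀ i, Numeric (L i)) ∧ ∀ j, Numeric (R j) :=
  Iff.rfl

end SetTheory.PGame

namespace PC

open SetTheory.PGame

def IsLeft (n m : ℕ) (p : ℕ × ℕ) : Prop :=
  (p.2 = m ∧ p.1 < n ∧ Even (p.1 + m)) ∨ (p.1 = n ∧ p.2 < m ∧ Even (n + p.2))

def IsRight (n m : ℕ) (p : ℕ × ℕ) : Prop :=
  (p.2 = m ∧ p.1 < n ∧ Odd (p.1 + m)) ∨ (p.1 = n ∧ p.2 < m ∧ Odd (n + p.2))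

theorem eq_mk (n m : ℕ) :
    PC n m = mk {p // IsLeft n m p} {p // IsRight n m p}
      (fun p => PC p.1.1 p.1.2) (fun p => PC p.1.1 p.1.2) := by
  rw [PC]; rfl

theorem IsLeft.add_lt {n m : ℕ} {p : ℕ × ℕ} (h : IsLeft n m p) : p.1 + p.2 < n + m := by
  rcases h with ⟨_, _, _⟩ | ⟨_, _, _⟩ <;> omega

theorem IsRight.add_lt {n m : ℕ} {p : ℕ × ℕ} (h : IsRight n m p) : p.1 + p.2 < n + m := by
  rcases h with ⟨_, _, _⟩ | ⟨_, _, _⟩ <;> omega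

theorem le_iff_options {n m n' m' : ℕ} :
    PC n m ≤ PC n' m' ↔
      (∀ p, IsLeft n m p → ¬ PC n' m' ≤ PC p.1 p.2) ∧
        ∀ q, IsRight n' m' q → ¬ PC q.1 q.2 ≤ PC n m := by
  rw [eq_mk n m, eq_mk n' m', mk_le_mk, ← eq_mk n m, ← eq_mk n' m']
  simp only [lf_iff_not_le, Subtype.forall]

def key (n m : ℕ) : ℕ ⊕ₗ ℕᵒᵈ :=
  if Even (n + m) then toLex (.inl (n + m - 2 * (n % 2)))
  else toLex (.inr (OrderDual.toDual (n + m)))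

theorem key_le_key_iff {n m n' m' : ℕ} :
    key n m ≤ key n' m' ↔
      ((n + m) % 2 = 0 ∧ ((n' + m') % 2 = 1 ∨ n + m - 2 * (n % 2) ≤ n' + m' - 2 * (n' % 2))) ∨
        ((n + m) % 2 = 1 ∧ (n' + m') % 2 = 1 ∧ n' + m' ≤ n + m) := by
  unfold key
  split_ifs with h h' h' <;> rw [Nat.even_iff] at h h'
  · rw [Sum.Lex.inl_le_inl_iff]; omega
  · simp only [Sum.Lex.inl_le_inr, true_iff]; omega
  · simp only [Sum.Lex.not_inr_le_inl, false_iff]; omega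
  · rw [Sum.Lex.inr_le_inr_iff, OrderDual.toDual_le_toDual]; omega

theorem key_lt_of_isLeft {n m : ℕ} {p : ℕ × ℕ} (h : IsLeft n m p) :
    key p.1 p.2 < key n m := by
  rw [← not_le, key_le_key_iff]
  rcases h with ⟨rfl, _, h⟩ | ⟨rfl, _, h⟩ <;> rw [Nat.even_iff] at h <;> omega

theorem key_lt_of_isRight {n m : ℕ} {p : ℕ × ℕ} (h : IsRight n m p) :
    key n m < key p.1 p.2 := by
  rw [← not_le, key_le_key_iff]
  rcases h with ⟨rfl, _, h⟩ | ⟨rfl, _, h⟩ <;> rw [Nat.odd_iff] at h <;> omega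

theorem exists_of_key_lt {n m n' m' : ℕ} (h : key n' m' < key n m) :
    (∃ p, IsLeft n m p ∧ key n' m' ≤ key p.1 p.2) ∨
      ∃ q, IsRight n' m' q ∧ key q.1 q.2 ≤ key n m := by
  rw [← not_le, key_le_key_iff] at h
  simp only [key_le_key_iff]
  rcases Nat.mod_two_eq_zero_or_one (n + m) with hnm | hnm
  · left
    by_cases hn : 2 ≤ n
    · exact ⟨(n - 2, m), .inl ⟨rfl, by omega, Nat.even_iff.2 (by omega)⟩, by dsimp only; omega⟩
    · exact ⟨(n, m - 2), .inr ⟨rfl, by omega, Nat.even_iff.2 (by omega)⟩, by dsimp only; omega⟩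
  rcases Nat.mod_two_eq_zero_or_one (n' + m') with hnm' | hnm'
  -- `PC n m` has a Left option of rank `n + m - 1`, `PC n' m'` a Right option of sum `n' + m' - 1`
  · by_cases hr : n' + m' - 2 * (n' % 2) < n + m
    · left
      by_cases hn : n % 2 = 1
      · exact ⟨(n - 1, m), .inl ⟨rfl, by omega, Nat.even_iff.2 (by omega)⟩, by dsimp only; omega⟩
      · exact ⟨(n, m - 1), .inr ⟨rfl, by omega, Nat.even_iff.2 (by omega)⟩, by dsimp only; omega⟩
    · right
      by_cases hn' : 1 ≤ n'
      · exact ⟨(n' - 1, m'), .inl ⟨rfl, by omega, Nat.odd_iff.2 (by omega)⟩, by dsimp only; omega⟩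
      · exact ⟨(n', m' - 1), .inr ⟨rfl, by omega, Nat.odd_iff.2 (by omega)⟩, by dsimp only; omega⟩
  · right
    by_cases hn' : 2 ≤ n'
    · exact ⟨(n' - 2, m'), .inl ⟨rfl, by omega, Nat.odd_iff.2 (by omega)⟩, by dsimp only; omega⟩
    · exact ⟨(n', m' - 2), .inr ⟨rfl, by omega, Nat.odd_iff.2 (by omega)⟩, by dsimp only; omega⟩

theorem key_le_key_iff_options {n m n' m' : ℕ} :
    key n m ≤ key n' m' ↔
      (∀ p, IsLeft n m p → key p.1 p.2 < key n' m') ∧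
        ∀ q, IsRight n' m' q → key n m < key q.1 q.2 := by
  refine ⟨fun h => ⟨fun p hp => (key_lt_of_isLeft hp).trans_le h,
    fun q hq => h.trans_lt (key_lt_of_isRight hq)⟩, fun ⟨hL, hR⟩ => ?_⟩
  by_contra! h
  rcases exists_of_key_lt h with ⟨p, hp, hle⟩ | ⟨q, hq, hle⟩
  · exact (hL p hp).not_ge hle
  · exact (hR q hq).not_ge hle

theorem le_iff_key_le (n m n' m' : ℕ) : PC n m ≤ PC n' m' ↔ key n m ≤ key n' m' := by
  rw [le_iff_options, key_le_key_iff_options]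
  refine and_congr (forall₂_congr fun p hp => ?_) (forall₂_congr fun q hq => ?_)
  · rw [le_iff_key_le n' m' p.1 p.2, not_le]
  · rw [le_iff_key_le q.1 q.2 n m, not_le]
termination_by n + m + n' + m'
decreasing_by
  · have := hp.add_lt; omega
  · have := hq.add_lt; omega

theorem lt_iff_key_lt {n m n' m' : ℕ} : PC n m < PC n' m' ↔ key n m < key n' m' := by
  rw [lt_iff_le_not_ge, ← le_iff_key_le, ← le_iff_key_le]
  rfl

theorem numeric (n m : ℕ) : (PC n m).Numeric := by
  rw [eq_mk, numeric_mk]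
  refine ⟨fun p q => ?_, fun p => numeric p.1.1 p.1.2, fun q => numeric q.1.1 q.1.2⟩
  exact lt_iff_key_lt.2 ((key_lt_of_isLeft p.2).trans (key_lt_of_isRight q.2))
termination_by n + m
decreasing_by
  · exact p.2.add_lt
  · exact q.2.add_lt

end PC

theorem stmt_9 (n m : ℕ) : (PC n m).Numeric :=
  PC.numeric n m
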